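/- arXiv:0902.1646 — 6 statements merged into one kernel-verified Lean document; each statement's English description precedes it below -/
import Mathlib

section
/- Let X be a Banach space with a Schauder basis (e_n), and suppose K ⊆ X^* is a 1-norming set contained in the span of the biorthogonal functionals such that K·K ⊆ C_2·B_{X^*}, where the product of f = ∑ a_i e_i^* and g = ∑ b_i e_i^* is defined coordinatewise as f·g = ∑ a_i b_i e_i^*. Then the norm of X^* is submultiplicative with constant C_2 on finitely supported functionals: ‖∑_{i=1}^n a_i b_i e_i^*‖ ≤ C_2 · ‖∑_{i=1}^n a_i e_i^*‖ · ‖∑_{i=1}^n b_i e_i^*‖. -/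
/-!
Write `T_d x = ∑_{j<n} d_j e_j^*(x) e_j` for the diagonal multiplier with symbol `d`, and
`F, G, H` for the functionals with coordinates `a`, `b`, `a·b`. Biorthogonality gives
`H = F ∘ T_b`, `f ∘ T_b = G ∘ T_{f(e)}` and `g ∘ T_{f(e)} = (f·g)`. Since `K` is norming,
`‖T_{f(e)} x‖ ≤ sup_{g ∈ K} |(f·g)(x)| ≤ C₂ ‖x‖` for `f ∈ K`, hence
`‖T_b x‖ ≤ sup_{f ∈ K} |G (T_{f(e)} x)| ≤ C₂ ‖G‖ ‖x‖`, and finally `|H x| ≤ C₂ ‖F‖ ‖G‖ ‖x‖`.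
-/

open Finset

namespace BiorthogonalSystem

variable {𝕜 X : Type*} [NontriviallyNormedField 𝕜] [NormedAddCommGroup X] [NormedSpace 𝕜 X]

def diagMultiplier (e : ℕ → X) (es : ℕ → X →L[𝕜] 𝕜) (n : ℕ) (d : ℕ → 𝕜) (x : X) : X :=
  ∑ j ∈ range n, (d j * es j x) • e j

variable {e : ℕ → X} {es : ℕ → X →L[𝕜] 𝕜} {n : ℕ}

theorem apply_diagMultiplier (φ : X →L[𝕜] 𝕜) (d : ℕ → 𝕜) (x : X) :
    φ (diagMultiplier e es n d x) = (∑ i ∈ range n, (φ (e i) * d i) • es i) x := by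
  simp only [diagMultiplier, map_sum, map_smul, _root_.sum_apply, smul_apply, smul_eq_mul]
  exact sum_congr rfl fun i _ => by ring

theorem sum_smul_apply_of_lt (hbi : ∀ n m, es n (e m) = if n = m then 1 else 0)
    (c : ℕ → 𝕜) {i : ℕ} (hi : i < n) : (∑ j ∈ range n, c j • es j) (e i) = c i := by
  simp [hbi, hi]

theorem sum_smul_apply_diagMultiplier (hbi : ∀ n m, es n (e m) = if n = m then 1 else 0)
    (c d : ℕ → 𝕜) (x : X) :
    (∑ i ∈ range n, c i • es i) (diagMultiplier e es n d x) =
      (∑ i ∈ range n, (c i * d i) • es i) x := by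
  rw [apply_diagMultiplier]
  refine congrArg (fun φ : X →L[𝕜] 𝕜 => φ x) (sum_congr rfl fun i hi => ?_)
  rw [sum_smul_apply_of_lt hbi c (mem_range.mp hi)]

theorem norm_le_of_norming {K : Set (X →L[𝕜] 𝕜)} {y : X} {M : ℝ}
    (hK : ∀ ε > (0 : ℝ), ∃ f ∈ K, ‖y‖ ≤ ‖f y‖ + ε) (hM : ∀ f ∈ K, ‖f y‖ ≤ M) : ‖y‖ ≤ M :=
  le_of_forall_pos_le_add fun ε hε =>
    let ⟨f, hf, hy⟩ := hK ε hε
    hy.trans (by linarith [hM f hf])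

section Norming

variable {K : Set (X →L[𝕜] 𝕜)} {C₂ : ℝ}
  (hK : ∀ x : X, ∀ ε > (0 : ℝ), ∃ f ∈ K, ‖x‖ ≤ ‖f x‖ + ε)
  (hKprod : ∀ f ∈ K, ∀ g ∈ K, ∀ n : ℕ, ‖∑ i ∈ range n, (f (e i) * g (e i)) • es i‖ ≤ C₂)
include hK hKprod

theorem norm_diagMultiplier_coords_le {f : X →L[𝕜] 𝕜} (hf : f ∈ K) (x : X) :
    ‖diagMultiplier e es n (fun i => f (e i)) x‖ ≤ C₂ * ‖x‖ :=
  norm_le_of_norming (hK _) fun g hg => by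
    rw [apply_diagMultiplier]
    exact (ContinuousLinearMap.le_opNorm _ x).trans
      (mul_le_mul_of_nonneg_right (hKprod g hg f hf n) (norm_nonneg x))

theorem norm_diagMultiplier_le (hbi : ∀ n m, es n (e m) = if n = m then 1 else 0)
    (b : ℕ → 𝕜) (x : X) :
    ‖diagMultiplier e es n b x‖ ≤ C₂ * ‖∑ i ∈ range n, b i • es i‖ * ‖x‖ :=
  norm_le_of_norming (hK _) fun f hf => by
    have hfG : f (diagMultiplier e es n b x) =
        (∑ i ∈ range n, b i • es i) (diagMultiplier e es n (fun i => f (e i)) x) := by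
      simp only [apply_diagMultiplier, sum_smul_apply_diagMultiplier hbi, mul_comm]
    calc ‖f (diagMultiplier e es n b x)‖
        ≤ ‖∑ i ∈ range n, b i • es i‖ * ‖diagMultiplier e es n (fun i => f (e i)) x‖ :=
          hfG ▸ ContinuousLinearMap.le_opNorm _ _
      _ ≤ ‖∑ i ∈ range n, b i • es i‖ * (C₂ * ‖x‖) :=
          mul_le_mul_of_nonneg_left (norm_diagMultiplier_coords_le hK hKprod hf x)
            (norm_nonneg _)
      _ = C₂ * ‖∑ i ∈ range n, b i • es i‖ * ‖x‖ := by ring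

theorem norm_sum_mul_smul_le (hbi : ∀ n m, es n (e m) = if n = m then 1 else 0)
    (hC₂ : 0 ≤ C₂) (a b : ℕ → 𝕜) :
    ‖∑ i ∈ range n, (a i * b i) • es i‖ ≤
      C₂ * ‖∑ i ∈ range n, a i • es i‖ * ‖∑ i ∈ range n, b i • es i‖ := by
  refine ContinuousLinearMap.opNorm_le_bound _ (by positivity) fun x => ?_
  rw [← sum_smul_apply_diagMultiplier hbi]
  calc _ ≤ ‖∑ i ∈ range n, a i • es i‖ * ‖diagMultiplier e es n b x‖ :=
        ContinuousLinearMap.le_opNorm _ _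
    _ ≤ ‖∑ i ∈ range n, a i • es i‖ * (C₂ * ‖∑ i ∈ range n, b i • es i‖ * ‖x‖) :=
        mul_le_mul_of_nonneg_left (norm_diagMultiplier_le hK hKprod hbi b x)
          (norm_nonneg _)
    _ = _ := by ring

end Norming

end BiorthogonalSystem

theorem stmt2_general {X : Type*} [NormedAddCommGroup X] [NormedSpace ℝ X]
    (e : ℕ → X) (es : ℕ → X →L[ℝ] ℝ) (C₂ : ℝ) (hC₂ : 0 < C₂)
    (hbi : ∀ n m, es n (e m) = if n = m then 1 else 0)
    (K : Set (X →L[ℝ] ℝ))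
    -- K is 1-norming
    (hKnorming : ∀ x : X, ∀ ε > (0:ℝ), ∃ f ∈ K, ‖x‖ ≤ |f x| + ε)
    -- K · K ⊆ C₂ • B_{X^*} : every coordinatewise product of members of K
    -- has norm at most C₂
    (hKprod : ∀ f ∈ K, ∀ g ∈ K, ∀ n : ℕ,
      ‖∑ i ∈ range n, (f (e i) * g (e i)) • es i‖ ≤ C₂) :
    ∀ (n : ℕ) (a b : ℕ → ℝ),
      ‖∑ i ∈ range n, (a i * b i) • es i‖ ≤
        C₂ * ‖∑ i ∈ range n, a i • es i‖ * ‖∑ i ∈ range n, b i • es i‖ :=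
  fun _ a b =>
    BiorthogonalSystem.norm_sum_mul_smul_le hKnorming hKprod hbi hC₂.le a b

/-- If `K ⊆ X^*` is a 1-norming set contained in the span of the biorthogonal
functionals of a Schauder basis `(e n)` of `X`, and the coordinatewise product
of any two members of `K` lies in `C₂ • B_{X^*}`, then the dual norm is
submultiplicative with constant `C₂` on finitely supported functionals. -/
theorem stmt2 {X : Type*} [NormedAddCommGroup X] [NormedSpace ℝ X] [CompleteSpace X]
    (e : ℕ → X) (es : ℕ → X →L[ℝ] ℝ) (C₂ : ℝ) (hC₂ : 0 < C₂)
    (hbi : ∀ n m, es n (e m) = if n = m then 1 else 0)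
    (K : Set (X →L[ℝ] ℝ))
    -- K is contained in the unit ball of X^*
    (hKball : ∀ f ∈ K, ‖f‖ ≤ 1)
    -- K is 1-norming
    (hKnorming : ∀ x : X, ∀ ε > (0:ℝ), ∃ f ∈ K, ‖x‖ ≤ |f x| + ε)
    -- K is contained in the linear span of the biorthogonal functionals
    (hKspan : ∀ f ∈ K, ∃ n : ℕ, f = ∑ i ∈ range n, f (e i) • es i)
    -- K · K ⊆ C₂ • B_{X^*} : every coordinatewise product of members of K
    -- has norm at most C₂
    (hKprod : ∀ f ∈ K, ∀ g ∈ K, ∀ n : ℕ,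
      ‖∑ i ∈ range n, (f (e i) * g (e i)) • es i‖ ≤ C₂) :
    ∀ (n : ℕ) (a b : ℕ → ℝ),
      ‖∑ i ∈ range n, (a i * b i) • es i‖ ≤
        C₂ * ‖∑ i ∈ range n, a i • es i‖ * ‖∑ i ∈ range n, b i • es i‖ :=
  stmt2_general e es C₂ hC₂ hbi K hKnorming hKprod
end

section
/- Let X be a Banach space with a normalized monotone Schauder basis (e_n) such that the basis dominates the summing basis with constant C_1 and the norm of X^* is submultiplicative with constant C_2 on finitely supported functionals. If for scalars (λ_n) there is M > 0 with ‖∑_{i=n}^m λ_i e_i^*‖ ≤ M for all n ≤ m, then for every x = ∑ μ_i e_i in X the partial sums ∑_{i=1}^n λ_i μ_i e_i form a Cauchy sequence in X; i.e., the diagonal operator with entries (λ_n) is well defined and bounded. -/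
/-!
The truncations `D n = ∑_{i<n} λ_i e_i^* ⊗ e_i` of the diagonal operator are uniformly
bounded: testing `D n y` against a norming functional `f` gives
`f (D n y) = (∑_{i<n} λ_i f(e_i) e_i^*) y`, and submultiplicativity bounds this functional by
`C₂ ‖∑_{i<n} λ_i e_i^*‖ ‖∑_{i<n} f(e_i) e_i^*‖`, where the first factor is at most `M` and the
second is `‖f ∘ P n‖ ≤ 1` by monotonicity. Since `D N ∘ P n = D n` for `n ≤ N`, the partial
sums of `∑ λ_i μ_i e_i` are images of differences of partial sums of `x` under operators of
norm at most `C₂ M`, hence they are Cauchy.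
-/

open Finset Filter

theorem CauchySeq.of_dist_le_mul {ι α β : Type*} [Nonempty ι] [SemilatticeSup ι]
    [PseudoMetricSpace α] [PseudoMetricSpace β] {u : ι → α} {v : ι → β} {K : ℝ} (hK : 0 ≤ K)
    (hv : CauchySeq v) (h : ∀ m n, dist (u m) (u n) ≤ K * dist (v m) (v n)) :
    CauchySeq u := by
  rw [Metric.cauchySeq_iff] at hv ⊢
  intro ε hε
  obtain ⟨N, hN⟩ := hv (ε / (K + 1)) (by positivity)
  refine ⟨N, fun m hm n hn => (h m n).trans_lt ?_⟩
  calc K * dist (v m) (v n) ≤ K * (ε / (K + 1)) := by gcongr; exact (hN m hm n hn).le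
    _ < ε := by rw [mul_div_assoc', div_lt_iff₀ (by positivity)]; nlinarith

theorem norm_sum_range_le_of_Icc {E : Type*} [SeminormedAddCommGroup E] {f : ℕ → E} {M : ℝ}
    (hM : 0 ≤ M) (hbdd : ∀ n m : ℕ, n ≤ m → ‖∑ i ∈ Icc n m, f i‖ ≤ M) (n : ℕ) :
    ‖∑ i ∈ range n, f i‖ ≤ M := by
  cases n with
  | zero => simpa using hM
  | succ k => simpa [Nat.range_succ_eq_Icc_zero] using hbdd 0 k k.zero_le

section DiagonalOperator

variable {X : Type*} [NormedAddCommGroup X] [NormedSpace ℝ X]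
  (e : ℕ → X) (es : ℕ → X →L[ℝ] ℝ)

def diagTrunc (lam : ℕ → ℝ) (n : ℕ) : X →L[ℝ] X :=
  ∑ i ∈ range n, lam i • (es i).smulRight (e i)

theorem diagTrunc_apply (lam : ℕ → ℝ) (n : ℕ) (x : X) :
    diagTrunc e es lam n x = ∑ i ∈ range n, (lam i * es i x) • e i := by
  simp [diagTrunc, mul_smul]

theorem diagTrunc_apply_partialSum (hbi : ∀ n m, es n (e m) = if n = m then 1 else 0)
    (lam : ℕ → ℝ) (n k : ℕ) (x : X) :
    diagTrunc e es lam n (∑ i ∈ range k, es i x • e i) = diagTrunc e es lam (min n k) x := by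
  have hcoord : ∀ i, es i (∑ j ∈ range k, es j x • e j) = if i < k then es i x else 0 := by
    intro i
    simp [map_sum, hbi]
  simp only [diagTrunc_apply, hcoord, mul_ite, mul_zero, ite_smul, zero_smul]
  rw [← sum_filter]
  congr 1
  ext i
  simp only [mem_filter, mem_range]
  omega

theorem norm_sum_range_apply_smul_le
    (hmono : ∀ (x : X) (n : ℕ), ‖∑ i ∈ range n, es i x • e i‖ ≤ ‖x‖) (f : X →L[ℝ] ℝ) (n : ℕ) :
    ‖∑ i ∈ range n, f (e i) • es i‖ ≤ ‖f‖ := by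
  refine ContinuousLinearMap.opNorm_le_bound _ (norm_nonneg f) fun x => ?_
  have hcomp : (∑ i ∈ range n, f (e i) • es i) x = f (∑ i ∈ range n, es i x • e i) := by
    simp [mul_comm]
  rw [hcomp]
  exact (f.le_opNorm _).trans (by gcongr; exact hmono x n)

theorem norm_diagTrunc_le {C : ℝ} (hC : 0 ≤ C)
    (hmono : ∀ (x : X) (n : ℕ), ‖∑ i ∈ range n, es i x • e i‖ ≤ ‖x‖)
    (hsub : ∀ (n : ℕ) (a b : ℕ → ℝ),
      ‖∑ i ∈ range n, (a i * b i) • es i‖ ≤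
        C * ‖∑ i ∈ range n, a i • es i‖ * ‖∑ i ∈ range n, b i • es i‖)
    (lam : ℕ → ℝ) (n : ℕ) :
    ‖diagTrunc e es lam n‖ ≤ C * ‖∑ i ∈ range n, lam i • es i‖ := by
  refine ContinuousLinearMap.opNorm_le_bound _ (by positivity) fun y => ?_
  obtain ⟨f, hf, hfy⟩ := exists_dual_vector'' ℝ (diagTrunc e es lam n y)
  have hdual :
      f (diagTrunc e es lam n y) = (∑ i ∈ range n, (lam i * f (e i)) • es i) y := by
    simp [diagTrunc_apply, mul_comm, mul_left_comm]
  calc ‖diagTrunc e es lam n y‖ = (∑ i ∈ range n, (lam i * f (e i)) • es i) y := by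
        rw [← hdual, hfy]; rfl
    _ ≤ ‖∑ i ∈ range n, (lam i * f (e i)) • es i‖ * ‖y‖ :=
        (Real.le_norm_self _).trans (ContinuousLinearMap.le_opNorm _ _)
    _ ≤ C * ‖∑ i ∈ range n, lam i • es i‖ * ‖f‖ * ‖y‖ := by
        gcongr
        exact (hsub n lam _).trans (by gcongr; exact norm_sum_range_apply_smul_le e es hmono f n)
    _ ≤ C * ‖∑ i ∈ range n, lam i • es i‖ * ‖y‖ := by
        gcongr ?_ * _
        exact mul_le_of_le_one_right (by positivity) hf

end DiagonalOperator

theorem stmt3_general {X : Type*} [NormedAddCommGroup X] [NormedSpace ℝ X]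
    (e : ℕ → X) (es : ℕ → X →L[ℝ] ℝ) (C₂ : ℝ) (hC₂ : 0 < C₂)
    (hbi : ∀ n m, es n (e m) = if n = m then 1 else 0)
    (hmono : ∀ (x : X) (n : ℕ), ‖∑ i ∈ range n, es i x • e i‖ ≤ ‖x‖)
    (hexp : ∀ x : X,
      Tendsto (fun n => ∑ i ∈ range n, es i x • e i) atTop (nhds x))
    (hsub : ∀ (n : ℕ) (a b : ℕ → ℝ),
      ‖∑ i ∈ range n, (a i * b i) • es i‖ ≤
        C₂ * ‖∑ i ∈ range n, a i • es i‖ * ‖∑ i ∈ range n, b i • es i‖)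
    (lam : ℕ → ℝ) (M : ℝ) (hM : 0 < M)
    (hbdd : ∀ n m : ℕ, n ≤ m → ‖∑ i ∈ Finset.Icc n m, lam i • es i‖ ≤ M) :
    ∀ x : X, CauchySeq (fun n => ∑ i ∈ range n, (lam i * es i x) • e i) := by
  intro x
  have hD : ∀ n, ‖diagTrunc e es lam n‖ ≤ C₂ * M := fun n =>
    (norm_diagTrunc_le e es hC₂.le hmono hsub lam n).trans <|
      mul_le_mul_of_nonneg_left (norm_sum_range_le_of_Icc hM.le hbdd n) hC₂.le
  refine CauchySeq.of_dist_le_mul (K := C₂ * M) (by positivity) (hexp x).cauchySeq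
    fun m n => ?_
  calc dist (∑ i ∈ range m, (lam i * es i x) • e i) (∑ i ∈ range n, (lam i * es i x) • e i)
      = ‖diagTrunc e es lam (max m n)
          (∑ i ∈ range m, es i x • e i - ∑ i ∈ range n, es i x • e i)‖ := by
        rw [dist_eq_norm, map_sub, diagTrunc_apply_partialSum e es hbi,
          diagTrunc_apply_partialSum e es hbi, min_eq_right (le_max_left m n),
          min_eq_right (le_max_right m n), diagTrunc_apply, diagTrunc_apply]
    _ ≤ C₂ * M * dist (∑ i ∈ range m, es i x • e i) (∑ i ∈ range n, es i x • e i) := by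
        rw [dist_eq_norm]
        exact (ContinuousLinearMap.le_opNorm _ _).trans (by gcongr; exact hD _)

/-- If `X` has a normalized monotone Schauder basis dominating the summing
basis with constant `C₁`, the dual norm is submultiplicative with constant
`C₂`, and the partial sums `∑_{i=n}^m λ_i e_i^*` are uniformly bounded by `M`,
then for every `x = ∑ μ_i e_i` the partial sums `∑_{i<n} λ_i μ_i e_i` form a
Cauchy sequence; i.e. the diagonal operator with entries `(λ_n)` is well
defined and bounded. -/
theorem stmt3 {X : Type*} [NormedAddCommGroup X] [NormedSpace ℝ X] [CompleteSpace X]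
    (e : ℕ → X) (es : ℕ → X →L[ℝ] ℝ) (C₁ C₂ : ℝ) (hC₁ : 0 < C₁) (hC₂ : 0 < C₂)
    (hbi : ∀ n m, es n (e m) = if n = m then 1 else 0)
    (hnormal : ∀ n, ‖e n‖ = 1)
    (hmono : ∀ (x : X) (n : ℕ), ‖∑ i ∈ range n, es i x • e i‖ ≤ ‖x‖)
    (hexp : ∀ x : X,
      Tendsto (fun n => ∑ i ∈ range n, es i x • e i) atTop (nhds x))
    (hdom : ∀ (n : ℕ) (μ : ℕ → ℝ),
      C₁ * |∑ i ∈ range n, μ i| ≤ ‖∑ i ∈ range n, μ i • e i‖)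
    (hsub : ∀ (n : ℕ) (a b : ℕ → ℝ),
      ‖∑ i ∈ range n, (a i * b i) • es i‖ ≤
        C₂ * ‖∑ i ∈ range n, a i • es i‖ * ‖∑ i ∈ range n, b i • es i‖)
    (lam : ℕ → ℝ) (M : ℝ) (hM : 0 < M)
    (hbdd : ∀ n m : ℕ, n ≤ m → ‖∑ i ∈ Finset.Icc n m, lam i • es i‖ ≤ M) :
    ∀ x : X, CauchySeq (fun n => ∑ i ∈ range n, (lam i * es i x) • e i) :=
  stmt3_general e es C₂ hC₂ hbi hmono hexp hsub lam M hM hbdd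
end

section
/- In the space c of convergent sequences with the summing basis (s_n), the set K = {± ∑_{i=1}^n s_i^* : n ∈ ℕ} is a 1-norming set, and K·K ⊆ K ∪ {0} (the coordinatewise product of two elements of K again lies in K up to sign or is zero); consequently the norm of c^* is submultiplicative with constant 1 with respect to the summing basis coordinates. -/
/-!
A finitely supported `μ` has eventually constant partial sums, so the supremum defining its norm
is a maximum `|pSum μ k|`; this makes `{± ∑_{i ≤ k} s_i^*}` 1-norming.

For submultiplicativity, let `‖μ‖ ≤ 1` and put `ν = (b_i μ_i)_{i < n}`. The `k`-th partial sum of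
`ν` is the functional `b` applied to the truncation of `μ` after `k`, and truncating does not
increase the norm of `c` (its partial sums are partial sums of `μ`). Hence `‖ν‖ ≤ ‖b‖`, and
`⟨a b, μ⟩ = ⟨a, ν⟩` is bounded by `‖a‖ ‖ν‖ ≤ ‖a‖ ‖b‖`.
-/

open Finset

/-- The coordinates of `x = ∑ μ_i s_i` (summing basis of `c`) give the sequence
`k ↦ ∑_{i ≤ k} μ_i`; its sup norm is the norm of `x` in `c`. -/
noncomputable def pSum (μ : ℕ → ℝ) (k : ℕ) : ℝ := ∑ i ∈ range (k + 1), μ i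

/-- The norm of `∑ μ_i s_i` in the space `c` of convergent sequences. -/
noncomputable def cNorm (μ : ℕ → ℝ) : ℝ := ⨆ k, |pSum μ k|

/-- The dual norm of the finitely supported functional `∑_{i<n} c_i s_i^*`,
computed against the summing-basis norm on `c`. -/
noncomputable def dualNormC (c : ℕ → ℝ) (n : ℕ) : ℝ :=
  sSup {r | ∃ μ : ℕ → ℝ, (∃ N, ∀ i, N ≤ i → μ i = 0) ∧ cNorm μ ≤ 1 ∧
    r = |∑ i ∈ range n, c i * μ i|}

def truncate (j : ℕ) (μ : ℕ → ℝ) : ℕ → ℝ := fun i => if i < j then μ i else 0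

lemma truncate_eq_zero_of_le {j i : ℕ} (μ : ℕ → ℝ) (h : j ≤ i) : truncate j μ i = 0 :=
  if_neg (not_lt.2 h)

lemma sum_range_truncate (m j : ℕ) (μ : ℕ → ℝ) :
    ∑ i ∈ range m, truncate j μ i = ∑ i ∈ range (min m j), μ i := by
  unfold truncate
  rw [← sum_filter]
  congr 1
  ext i
  simp

lemma cNorm_nonneg (μ : ℕ → ℝ) : 0 ≤ cNorm μ :=
  Real.iSup_nonneg fun k => abs_nonneg (pSum μ k)

section FinitelySupported

variable {μ : ℕ → ℝ} {N : ℕ}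

lemma pSum_eq_of_le (hN : ∀ i, N ≤ i → μ i = 0) {k : ℕ} (hk : N ≤ k) :
    pSum μ k = pSum μ N := by
  refine (sum_subset (by simpa using hk) fun i _ hi => hN i ?_).symm
  simp at hi
  omega

lemma exists_max_abs_pSum (hN : ∀ i, N ≤ i → μ i = 0) :
    ∃ k₀, ∀ k, |pSum μ k| ≤ |pSum μ k₀| := by
  obtain ⟨k₀, -, hk₀⟩ := exists_max_image (range (N + 1)) (fun k => |pSum μ k|) ⟨0, by simp⟩
  refine ⟨k₀, fun k => ?_⟩
  rcases le_or_gt k N with h | h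
  · exact hk₀ k (by simpa [Nat.lt_succ_iff] using h)
  · rw [pSum_eq_of_le hN h.le]
    exact hk₀ N (by simp)

lemma exists_cNorm_eq_abs_pSum (hN : ∀ i, N ≤ i → μ i = 0) : ∃ k, cNorm μ = |pSum μ k| := by
  obtain ⟨k₀, hk₀⟩ := exists_max_abs_pSum hN
  exact ⟨k₀, le_antisymm (ciSup_le hk₀) (le_ciSup ⟨_, Set.forall_mem_range.2 hk₀⟩ k₀)⟩

lemma abs_pSum_le_cNorm (hN : ∀ i, N ≤ i → μ i = 0) (k : ℕ) : |pSum μ k| ≤ cNorm μ := by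
  obtain ⟨k₀, hk₀⟩ := exists_max_abs_pSum hN
  exact le_ciSup ⟨_, Set.forall_mem_range.2 hk₀⟩ k

lemma abs_sum_range_le_cNorm (hN : ∀ i, N ≤ i → μ i = 0) (t : ℕ) :
    |∑ i ∈ range t, μ i| ≤ cNorm μ := by
  cases t with
  | zero => simpa using cNorm_nonneg μ
  | succ k => exact abs_pSum_le_cNorm hN k

lemma abs_le_two_mul_cNorm (hN : ∀ i, N ≤ i → μ i = 0) (i : ℕ) : |μ i| ≤ 2 * cNorm μ := by
  rw [← sum_range_succ_sub_sum μ]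
  linarith [abs_sub (∑ j ∈ range (i + 1), μ j) (∑ j ∈ range i, μ j),
    abs_sum_range_le_cNorm hN (i + 1), abs_sum_range_le_cNorm hN i]

lemma cNorm_truncate_le (hN : ∀ i, N ≤ i → μ i = 0) (j : ℕ) : cNorm (truncate j μ) ≤ cNorm μ :=
  ciSup_le fun k => by
    rw [pSum, sum_range_truncate]
    exact abs_sum_range_le_cNorm hN _

end FinitelySupported

lemma bddAbove_dualNormC_set (c : ℕ → ℝ) (n : ℕ) :
    BddAbove {r | ∃ μ : ℕ → ℝ, (∃ N, ∀ i, N ≤ i → μ i = 0) ∧ cNorm μ ≤ 1 ∧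
      r = |∑ i ∈ range n, c i * μ i|} := by
  refine ⟨∑ i ∈ range n, |c i| * 2, ?_⟩
  rintro r ⟨μ, ⟨N, hN⟩, h1, rfl⟩
  calc |∑ i ∈ range n, c i * μ i| ≤ ∑ i ∈ range n, |c i * μ i| := abs_sum_le_sum_abs _ _
    _ ≤ ∑ i ∈ range n, |c i| * 2 := by
      refine sum_le_sum fun i _ => ?_
      rw [abs_mul]
      gcongr
      linarith [abs_le_two_mul_cNorm hN i]

lemma dualNormC_nonneg (c : ℕ → ℝ) (n : ℕ) : 0 ≤ dualNormC c n :=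
  Real.sSup_nonneg <| by
    rintro r ⟨μ, -, -, rfl⟩
    exact abs_nonneg _

lemma abs_sum_mul_le_dualNormC_mul_cNorm (c : ℕ → ℝ) (n : ℕ) {μ : ℕ → ℝ} {N : ℕ}
    (hN : ∀ i, N ≤ i → μ i = 0) :
    |∑ i ∈ range n, c i * μ i| ≤ dualNormC c n * cNorm μ := by
  rcases (cNorm_nonneg μ).eq_or_lt with h0 | hpos
  · have hμ : ∀ i, μ i = 0 := fun i => by
      simpa [← h0] using abs_le_two_mul_cNorm hN i
    simp [hμ, ← h0]
  · set m := cNorm μ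
    have hscaled : cNorm (fun i => μ i / m) ≤ 1 := ciSup_le fun k => by
      rw [pSum, ← sum_div, abs_div, abs_of_pos hpos, div_le_one hpos]
      exact abs_pSum_le_cNorm hN k
    have hmem := le_csSup (bddAbove_dualNormC_set c n)
      ⟨fun i => μ i / m, ⟨N, fun i hi => by simp [hN i hi]⟩, hscaled, rfl⟩
    have hsum : ∑ i ∈ range n, c i * μ i = m * ∑ i ∈ range n, c i * (μ i / m) := by
      rw [mul_sum]
      exact sum_congr rfl fun i _ => by field_simp
    rw [hsum, abs_mul, abs_of_pos hpos, mul_comm]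
    exact mul_le_mul_of_nonneg_right hmem hpos.le

lemma cNorm_truncate_mul_le (b : ℕ → ℝ) (n : ℕ) {μ : ℕ → ℝ} {N : ℕ}
    (hN : ∀ i, N ≤ i → μ i = 0) :
    cNorm (truncate n (fun i => b i * μ i)) ≤ dualNormC b n * cNorm μ :=
  ciSup_le fun k => by
    have hpSum : pSum (truncate n (fun i => b i * μ i)) k =
        ∑ i ∈ range n, b i * truncate (k + 1) μ i := by
      rw [pSum, sum_range_truncate, min_comm, ← sum_range_truncate]
      exact sum_congr rfl fun i _ => by simp only [truncate, mul_ite, mul_zero]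
    rw [hpSum]
    calc _ ≤ dualNormC b n * cNorm (truncate (k + 1) μ) :=
          abs_sum_mul_le_dualNormC_mul_cNorm b n fun i => truncate_eq_zero_of_le μ
      _ ≤ dualNormC b n * cNorm μ := by
          gcongr
          · exact dualNormC_nonneg b n
          · exact cNorm_truncate_le hN _

theorem dualNormC_mul_le (a b : ℕ → ℝ) (n : ℕ) :
    dualNormC (fun i => a i * b i) n ≤ dualNormC a n * dualNormC b n := by
  refine Real.sSup_le ?_ (mul_nonneg (dualNormC_nonneg a n) (dualNormC_nonneg b n))
  rintro r ⟨μ, ⟨N, hN⟩, h1, rfl⟩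
  set ν := truncate n (fun i => b i * μ i)
  have hsum : ∑ i ∈ range n, a i * b i * μ i = ∑ i ∈ range n, a i * ν i :=
    sum_congr rfl fun i hi => by simp [ν, truncate, mem_range.1 hi, mul_assoc]
  calc |∑ i ∈ range n, a i * b i * μ i| = |∑ i ∈ range n, a i * ν i| := by rw [hsum]
    _ ≤ dualNormC a n * cNorm ν :=
        abs_sum_mul_le_dualNormC_mul_cNorm a n fun i => truncate_eq_zero_of_le _
    _ ≤ dualNormC a n * (dualNormC b n * cNorm μ) := by
        gcongr
        · exact dualNormC_nonneg a n
        · exact cNorm_truncate_mul_le b n hN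
    _ ≤ dualNormC a n * dualNormC b n := by
        rw [← mul_assoc]
        exact mul_le_of_le_one_right (by positivity [dualNormC_nonneg a n, dualNormC_nonneg b n]) h1

/-- In the space `c` with the summing basis, the set
`K = {± ∑_{i=1}^n s_i^*}` (whose elements act as `μ ↦ ± pSum μ k`) is
1-norming, `K·K ⊆ K ∪ {0}` (coordinatewise products: the coefficient sequence
of `± ∑_{i<n} s_i^*` is `± χ_{[0,n)}`, and the product of two such is again of
this form), and consequently the dual norm is submultiplicative with
constant 1. -/
theorem stmt4 :
    -- K is 1-norming for c
    (∀ μ : ℕ → ℝ, (∃ N, ∀ i, N ≤ i → μ i = 0) → ∀ ε > (0:ℝ),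
      ∃ (k : ℕ) (s : ℝ), (s = 1 ∨ s = -1) ∧ cNorm μ ≤ s * pSum μ k + ε) ∧
    -- K·K ⊆ K ∪ {0}: the coordinatewise product of the coefficient sequences
    -- of two members of K is again (a sign times) such a coefficient sequence
    (∀ n m : ℕ, ∀ s t : ℝ, (s = 1 ∨ s = -1) → (t = 1 ∨ t = -1) →
      (s * t = 1 ∨ s * t = -1) ∧
      ((fun i => (if i < n then s else 0) * (if i < m then t else 0)) =
        fun i => if i < min n m then s * t else 0)) ∧
    -- consequently the dual norm is submultiplicative with constant 1
    (∀ (n : ℕ) (a b : ℕ → ℝ),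
      dualNormC (fun i => a i * b i) n ≤ dualNormC a n * dualNormC b n) := by
  refine ⟨?_, ?_, fun n a b => dualNormC_mul_le a b n⟩
  · rintro μ ⟨N, hN⟩ ε hε
    obtain ⟨k, hk⟩ := exists_cNorm_eq_abs_pSum hN
    rcases abs_choice (pSum μ k) with h | h
    · exact ⟨k, 1, .inl rfl, by linarith⟩
    · exact ⟨k, -1, .inr rfl, by linarith⟩
  · intro n m s t hs ht
    refine ⟨by rcases hs with rfl | rfl <;> rcases ht with rfl | rfl <;> norm_num, ?_⟩
    funext i
    by_cases hn : i < n <;> by_cases hm : i < m <;> simp [hn, hm]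
end

section
/- Let 𝒮 be the collection of all finite intervals of ℕ together with all finite segments of the dyadic tree (under the identification of ℕ with the dyadic tree via the bijection h). Then 𝒮 is closed under pairwise intersections: for A, B ∈ 𝒮, A ∩ B ∈ 𝒮. -/
/-- The partial order of the dyadic tree transported to `ℕ` via the standard
bijection `h(ε₁…ε_n) = 2ⁿ + ∑ ε_j 2^{n-j}` (so the children of `a` are `2a`
and `2a+1`): `a ⪯ b` iff `a ≥ 1` and the binary expansion of `a` is an
initial segment of that of `b`. -/
def treeLE (a b : ℕ) : Prop := 1 ≤ a ∧ ∃ k : ℕ, b / 2 ^ k = a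

/-- A (finite) segment of the dyadic tree: a set of the form
`{γ : α ⪯ γ ⪯ β}`. -/
def IsTreeSegment (A : Set ℕ) : Prop :=
  ∃ α β : ℕ, treeLE α β ∧ A = {γ | treeLE α γ ∧ treeLE γ β}

/-- A (finite) interval of `ℕ`. -/
def IsNatInterval (A : Set ℕ) : Prop := ∃ a b : ℕ, A = Set.Icc a b

/-! Both kinds of sets are convex for the tree order. Intersecting a tree segment with a
tree-convex set gives a tree-convex subset of the chain below the top of the segment, and on
that chain the tree order coincides with `≤`, so a nonempty such set is the tree segment
between its least and its greatest element. -/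

namespace treeLE

theorem le {a b : ℕ} (h : treeLE a b) : a ≤ b := by
  obtain ⟨-, k, rfl⟩ := h
  exact Nat.div_le_self _ _

theorem refl {a : ℕ} (h : 1 ≤ a) : treeLE a a := ⟨h, 0, by simp⟩

theorem trans {a b c : ℕ} (hab : treeLE a b) (hbc : treeLE b c) : treeLE a c := by
  obtain ⟨ha, j, rfl⟩ := hab
  obtain ⟨-, k, rfl⟩ := hbc
  exact ⟨ha, k + j, by rw [pow_add, Nat.div_div_eq_div_mul]⟩

theorem total_of_le_right {a b c : ℕ} (hac : treeLE a c) (hbc : treeLE b c) :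
    treeLE a b ∨ treeLE b a := by
  obtain ⟨ha, j, rfl⟩ := hac
  obtain ⟨hb, k, rfl⟩ := hbc
  rcases le_total j k with h | h
  · exact .inr ⟨hb, k - j, by rw [Nat.div_div_eq_div_mul, ← pow_add, Nat.add_sub_cancel' h]⟩
  · exact .inl ⟨ha, j - k, by rw [Nat.div_div_eq_div_mul, ← pow_add, Nat.add_sub_cancel' h]⟩

theorem of_le_of_treeLE_right {a b c : ℕ} (hac : treeLE a c) (hbc : treeLE b c) (hab : a ≤ b) :
    treeLE a b := by
  rcases total_of_le_right hac hbc with h | h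
  · exact h
  · obtain rfl := le_antisymm hab h.le
    exact h

end treeLE

def TreeOrdConnected (S : Set ℕ) : Prop :=
  ∀ ⦃x⦄, x ∈ S → ∀ ⦃y⦄, y ∈ S → ∀ ⦃z⦄, treeLE x z → treeLE z y → z ∈ S

theorem TreeOrdConnected.inter {S T : Set ℕ} (hS : TreeOrdConnected S)
    (hT : TreeOrdConnected T) : TreeOrdConnected (S ∩ T) :=
  fun _ hx _ hy _ hxz hzy => ⟨hS hx.1 hy.1 hxz hzy, hT hx.2 hy.2 hxz hzy⟩

theorem Set.OrdConnected.treeOrdConnected {S : Set ℕ} (hS : S.OrdConnected) :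
    TreeOrdConnected S :=
  fun _ hx _ hy _ hxz hzy => hS.out hx hy ⟨hxz.le, hzy.le⟩

theorem IsNatInterval.treeOrdConnected {S : Set ℕ} (hS : IsNatInterval S) :
    TreeOrdConnected S := by
  obtain ⟨a, b, rfl⟩ := hS
  exact Set.ordConnected_Icc.treeOrdConnected

theorem IsTreeSegment.treeOrdConnected {S : Set ℕ} (hS : IsTreeSegment S) :
    TreeOrdConnected S := by
  obtain ⟨α, β, -, rfl⟩ := hS
  exact fun _ hx _ hy _ hxz hzy => ⟨hx.1.trans hxz, hzy.trans hy.2⟩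

theorem IsTreeSegment.of_treeOrdConnected {S : Set ℕ} {β : ℕ} (hS : TreeOrdConnected S)
    (hβ : ∀ γ ∈ S, treeLE γ β) (hne : S.Nonempty) : IsTreeSegment S := by
  have hbdd : BddAbove S := ⟨β, fun γ hγ => (hβ γ hγ).le⟩
  have hmin : sInf S ∈ S := Nat.sInf_mem hne
  have hmax : sSup S ∈ S := Nat.sSup_mem hne hbdd
  have hbetween : ∀ γ ∈ S, treeLE (sInf S) γ ∧ treeLE γ (sSup S) := fun γ hγ =>
    ⟨.of_le_of_treeLE_right (hβ _ hmin) (hβ γ hγ) (Nat.sInf_le hγ),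
      .of_le_of_treeLE_right (hβ γ hγ) (hβ _ hmax) (le_csSup hbdd hγ)⟩
  refine ⟨sInf S, sSup S, (hbetween _ hmax).1, Set.ext fun γ => ⟨hbetween γ, ?_⟩⟩
  exact fun ⟨hminγ, hγmax⟩ => hS hmin hmax hminγ hγmax

theorem IsTreeSegment.inter {A B : Set ℕ} (hA : IsTreeSegment A) (hB : TreeOrdConnected B)
    (hne : (A ∩ B).Nonempty) : IsTreeSegment (A ∩ B) := by
  obtain ⟨α, β, -, rfl⟩ := id hA
  exact .of_treeOrdConnected (hA.treeOrdConnected.inter hB) (fun γ hγ => hγ.1.2) hne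

/-- The collection `𝒮` of finite intervals of `ℕ` together with finite
segments of the dyadic tree is closed under pairwise intersections. -/
theorem stmt6 (A B : Set ℕ)
    (hA : IsNatInterval A ∨ IsTreeSegment A)
    (hB : IsNatInterval B ∨ IsTreeSegment B) :
    IsNatInterval (A ∩ B) ∨ IsTreeSegment (A ∩ B) := by
  rcases Set.eq_empty_or_nonempty (A ∩ B) with hempty | hne
  · exact .inl ⟨1, 0, by simp [hempty]⟩
  rcases hA with hA | hA
  · rcases hB with hB | hB
    · obtain ⟨a, b, rfl⟩ := hA
      obtain ⟨c, d, rfl⟩ := hB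
      exact .inl ⟨_, _, Set.Icc_inter_Icc⟩
    · rw [Set.inter_comm] at hne ⊢
      exact .inr (hB.inter hA.treeOrdConnected hne)
  · exact .inr (hA.inter (hB.elim (·.treeOrdConnected) (·.treeOrdConnected)) hne)
end

section
/- Suppose in the space 𝔛_D (with norming set D closed under coordinatewise products) that f ∈ M is a product f = f_1·...·f_r of weighted functionals f_i ∈ K with weights w(f_i) = m_{j_i}, where each f_i can be written as (1/m_{j_i}) times a sum of at most n_{j_i} successive elements of D. Then f can be written as f = (1/w(f)) ∑_{i=1}^d h_i with h_1 < ... < h_d in D and d ≤ n_{j_1} + ... + n_{j_r} - (r-1), where w(f) = m_{j_1}·...·m_{j_r}. -/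
/-!
Multiply out `(∑ᵢ gᵢ)(∑ⱼ g'ⱼ)` and group the products `gᵢ g'ⱼ` by `i + j`. The pairs whose
supports overlap form a chain, monotone in both coordinates, so each antidiagonal carries at most one
nonzero product, and products on different antidiagonals are successive. This turns a product of a
sum of `d` and a sum of `d'` successive elements of `D` into a sum of `d + d' - 1` successive
elements of `D` (some of them zero, which lies in `D` as a restriction to an empty interval).
Induction on the number of factors gives the bound `∑ dᵢ - (r - 1)`.
-/

open Finset

/-- `F 0 < F 1 < ⋯ < F (d-1)` are successively supported functionals. -/
def SuccBlocks (F : ℕ → (ℕ → ℝ)) (d : ℕ) : Prop :=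
  ∀ i j, i < j → j < d → ∀ k l, F i k ≠ 0 → F j l ≠ 0 → k < l

def IsBlockSum (D : Set (ℕ → ℝ)) (f : ℕ → ℝ) (d : ℕ) : Prop :=
  ∃ g : ℕ → ℕ → ℝ, (∀ t < d, g t ∈ D) ∧ SuccBlocks g d ∧ f = ∑ t ∈ range d, g t

def productBlock (g g' : ℕ → ℕ → ℝ) (d d' s : ℕ) : ℕ → ℝ :=
  ∑ p ∈ (range d ×ˢ range d').filter (fun p => p.1 + p.2 = s), g p.1 * g' p.2

section ProductBlock

variable {g g' : ℕ → ℕ → ℝ} {d d' : ℕ}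

theorem SuccBlocks.lt_of_add_lt (hg : SuccBlocks g d) (hg' : SuccBlocks g' d')
    {i j i' j' k l : ℕ} (hi' : i' < d) (hj' : j' < d') (hsum : i + j < i' + j')
    (hk : g i k ≠ 0) (hk' : g' j k ≠ 0) (hl : g i' l ≠ 0) (hl' : g' j' l ≠ 0) : k < l := by
  rcases lt_or_ge i i' with h | h
  · exact hg i i' h hi' k l hk hl
  · exact hg' j j' (by omega) hj' k l hk' hl'

theorem SuccBlocks.eq_of_add_eq (hg : SuccBlocks g d) (hg' : SuccBlocks g' d')
    {i j i' j' k l : ℕ} (hi : i < d) (hj : j < d') (hi' : i' < d) (hj' : j' < d')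
    (hsum : i + j = i' + j')
    (hk : g i k ≠ 0) (hk' : g' j k ≠ 0) (hl : g i' l ≠ 0) (hl' : g' j' l ≠ 0) :
    i = i' ∧ j = j' := by
  rcases lt_trichotomy i i' with h | h | h
  · have := hg i i' h hi' k l hk hl
    have := hg' j' j (by omega) hj l k hl' hk'
    omega
  · omega
  · have := hg i' i h hi l k hl hk
    have := hg' j j' (by omega) hj' k l hk' hl'
    omega

theorem exists_of_productBlock_ne_zero {s k : ℕ} (h : productBlock g g' d d' s k ≠ 0) :
    ∃ i < d, ∃ j < d', i + j = s ∧ g i k ≠ 0 ∧ g' j k ≠ 0 := by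
  simp only [productBlock, Finset.sum_apply, Pi.mul_apply] at h
  obtain ⟨p, hp, hpk⟩ := exists_ne_zero_of_sum_ne_zero h
  simp only [mem_filter, mem_product, mem_range] at hp
  exact ⟨p.1, hp.1.1, p.2, hp.1.2, hp.2, left_ne_zero_of_mul hpk, right_ne_zero_of_mul hpk⟩

theorem SuccBlocks.productBlock (hg : SuccBlocks g d) (hg' : SuccBlocks g' d') (e : ℕ) :
    SuccBlocks (productBlock g g' d d') e := by
  intro s s' hss' _ k l hk hl
  obtain ⟨i, -, j, -, rfl, hgk, hg'k⟩ := exists_of_productBlock_ne_zero hk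
  obtain ⟨i', hi', j', hj', rfl, hgl, hg'l⟩ := exists_of_productBlock_ne_zero hl
  exact hg.lt_of_add_lt hg' hi' hj' hss' hgk hg'k hgl hg'l

theorem productBlock_mem {D : Set (ℕ → ℝ)}
    (hDprod : ∀ p ∈ D, ∀ q ∈ D, (fun k => p k * q k) ∈ D) (hD0 : 0 ∈ D)
    (hgD : ∀ t < d, g t ∈ D) (hg'D : ∀ t < d', g' t ∈ D)
    (hg : SuccBlocks g d) (hg' : SuccBlocks g' d') (s : ℕ) :
    productBlock g g' d d' s ∈ D := by
  by_cases hzero : productBlock g g' d d' s = 0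
  · rwa [hzero]
  obtain ⟨k, hk⟩ := Function.ne_iff.mp hzero
  obtain ⟨i, hi, j, hj, hij, hgk, hg'k⟩ := exists_of_productBlock_ne_zero hk
  have hsingle : productBlock g g' d d' s = g i * g' j := by
    refine sum_eq_single_of_mem (i, j) (by simp [hi, hj, hij]) fun p hp hpij => ?_
    simp only [mem_filter, mem_product, mem_range] at hp
    funext l
    by_contra hl
    obtain ⟨rfl, rfl⟩ := hg.eq_of_add_eq hg' hi hj hp.1.1 hp.1.2 (hij.trans hp.2.symm)
      hgk hg'k (left_ne_zero_of_mul hl) (right_ne_zero_of_mul hl)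
    exact hpij rfl
  rw [hsingle]
  exact hDprod _ (hgD i hi) _ (hg'D j hj)

theorem sum_mul_sum_eq_sum_productBlock :
    (∑ t ∈ range d, g t) * (∑ t ∈ range d', g' t) =
      ∑ s ∈ range (d + d' - 1), productBlock g g' d d' s := by
  rw [sum_mul_sum, ← sum_product']
  refine (sum_fiberwise_of_maps_to (fun p hp => ?_) _).symm
  simp only [mem_product, mem_range] at hp ⊢
  omega

end ProductBlock

section IsBlockSum

variable {D : Set (ℕ → ℝ)}

theorem IsBlockSum.mul (hDprod : ∀ p ∈ D, ∀ q ∈ D, (fun k => p k * q k) ∈ D) (hD0 : 0 ∈ D)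
    {f f' : ℕ → ℝ} {d d' : ℕ} (hf : IsBlockSum D f d)
    (hf' : IsBlockSum D f' d') : IsBlockSum D (f * f') (d + d' - 1) := by
  obtain ⟨g, hgD, hg, rfl⟩ := hf
  obtain ⟨g', hg'D, hg', rfl⟩ := hf'
  exact ⟨productBlock g g' d d', fun s _ => productBlock_mem hDprod hD0 hgD hg'D hg hg' s,
    hg.productBlock hg' _, sum_mul_sum_eq_sum_productBlock⟩

theorem IsBlockSum.prod (hDprod : ∀ p ∈ D, ∀ q ∈ D, (fun k => p k * q k) ∈ D) (hD0 : 0 ∈ D)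
    {ι : Type*} {s : Finset ι} (hs : s.Nonempty) {f : ι → ℕ → ℝ}
    {ds : ι → ℕ} (hf : ∀ i ∈ s, IsBlockSum D (f i) (ds i)) (hds : ∀ i ∈ s, 1 ≤ ds i) :
    IsBlockSum D (∏ i ∈ s, f i) ((∑ i ∈ s, ds i) - (#s - 1)) := by
  induction hs using Nonempty.cons_induction with
  | singleton a => simpa using hf a (mem_singleton_self a)
  | cons a s ha hs ih =>
    simp only [mem_cons, forall_eq_or_imp] at hf hds
    have hcard : #s ≤ ∑ i ∈ s, ds i := by simpa using card_nsmul_le_sum s ds 1 hds.2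
    have hs1 : 1 ≤ #s := hs.card_pos
    rw [prod_cons, sum_cons, card_cons]
    convert (IsBlockSum.mul hDprod hD0 hf.1 (ih hf.2 hds.2)) using 1
    omega

end IsBlockSum

theorem zero_mem_of_restrict {D : Set (ℕ → ℝ)}
    (hDrestr : ∀ p ∈ D, ∀ a b : ℕ, (fun k => if k ∈ Finset.Icc a b then p k else 0) ∈ D)
    {p : ℕ → ℝ} (hp : p ∈ D) : 0 ∈ D := by
  simpa [Pi.zero_def] using hDrestr p hp 1 0

theorem stmt12_general (D : Set (ℕ → ℝ))
    (hDprod : ∀ p ∈ D, ∀ q ∈ D, (fun k => p k * q k) ∈ D)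
    (hDrestr : ∀ p ∈ D, ∀ a b : ℕ,
      (fun k => if k ∈ Finset.Icc a b then p k else 0) ∈ D)
    (n m : ℕ → ℕ) (r : ℕ) (hr : 1 ≤ r) (js : Fin r → ℕ)
    (fi : Fin r → (ℕ → ℝ))
    (hfi : ∀ i : Fin r, ∃ (di : ℕ) (g : ℕ → (ℕ → ℝ)),
      1 ≤ di ∧ di ≤ n (js i) ∧ (∀ t < di, g t ∈ D) ∧ SuccBlocks g di ∧
      fi i = (1 / (m (js i) : ℝ)) • ∑ t ∈ range di, g t) :
    ∃ (d : ℕ) (h : ℕ → (ℕ → ℝ)),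
      d ≤ (∑ i, n (js i)) - (r - 1) ∧
      (∀ t < d, h t ∈ D) ∧ SuccBlocks h d ∧
      (fun k => ∏ i, fi i k) =
        (1 / ∏ i, (m (js i) : ℝ)) • ∑ t ∈ range d, h t := by
  choose di g hdi hdn hgD hg hfi using hfi
  have hD0 : 0 ∈ D := zero_mem_of_restrict hDrestr (hgD ⟨0, hr⟩ 0 (hdi _))
  obtain ⟨h, hhD, hh, hprod⟩ := IsBlockSum.prod hDprod hD0 ⟨⟨0, hr⟩, mem_univ _⟩
    (fun i _ => ⟨g i, hgD i, hg i, rfl⟩) (fun i _ => hdi i)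
  refine ⟨_, h, ?_, hhD, hh, ?_⟩
  · rw [card_univ, Fintype.card_fin]
    exact Nat.sub_le_sub_right (sum_le_sum fun i _ => hdn i) _
  · rw [← hprod, one_div, ← prod_inv_distrib, ← prod_smul, ← prod_fn]
    simp only [hfi, one_div]

/-- Suppose `D ⊆ c₀₀(ℕ)` is closed under coordinatewise products and under
restriction to intervals, and `f = f_1 ⋯ f_r` is a coordinatewise product of
weighted functionals `f_i = (1/m_{j_i})(g_1 + ⋯ + g_{d_i})` with
`g_1 < ⋯ < g_{d_i}` in `D` and `d_i ≤ n_{j_i}`.  Then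
`f = (1/(m_{j_1}⋯m_{j_r})) ∑_{t<d} h_t` with `h_0 < ⋯ < h_{d-1}` in `D` and
`d ≤ n_{j_1} + ⋯ + n_{j_r} - (r-1)`. -/
theorem stmt12 (D : Set (ℕ → ℝ))
    (hDprod : ∀ p ∈ D, ∀ q ∈ D, (fun k => p k * q k) ∈ D)
    (hDrestr : ∀ p ∈ D, ∀ a b : ℕ,
      (fun k => if k ∈ Finset.Icc a b then p k else 0) ∈ D)
    (n m : ℕ → ℕ) (r : ℕ) (hr : 1 ≤ r) (js : Fin r → ℕ)
    (hm : ∀ i, 1 ≤ m (js i))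
    (fi : Fin r → (ℕ → ℝ))
    (hfi : ∀ i : Fin r, ∃ (di : ℕ) (g : ℕ → (ℕ → ℝ)),
      1 ≤ di ∧ di ≤ n (js i) ∧ (∀ t < di, g t ∈ D) ∧ SuccBlocks g di ∧
      fi i = (1 / (m (js i) : ℝ)) • ∑ t ∈ range di, g t) :
    ∃ (d : ℕ) (h : ℕ → (ℕ → ℝ)),
      d ≤ (∑ i, n (js i)) - (r - 1) ∧
      (∀ t < d, h t ∈ D) ∧ SuccBlocks h d ∧
      (fun k => ∏ i, fi i k) =
        (1 / ∏ i, (m (js i) : ℝ)) • ∑ t ∈ range d, h t :=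
  stmt12_general D hDprod hDrestr n m r hr js fi hfi
end

section
/- Let X be a Banach space with a Schauder basis (e_n) whose dual ball satisfies B_{X^*}·B_{X^*} ⊆ B_{X^*} under coordinatewise products and which contains ±∑_{i=1}^n e_i^* for all n (normalized so C_1 = C_2 = 1). Then a series ∑ a_i e_i^* converges in norm in X^* if and only if the corresponding diagonal operator ∑ a_i e_i^* ⊗ e_i converges in operator norm, i.e. compact diagonal operators correspond exactly to the norm-closed span of the biorthogonal functionals. -/
/-!
For a finitely supported diagonal operator `T = ∑_{i ∈ F} aᵢ eᵢ^* ⊗ eᵢ` with symbol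
`f = ∑_{i ∈ F} aᵢ eᵢ^*` one has `‖T‖ = ‖f‖`. If `g` is a norming functional of `T x`, then
`g (T x) = h x` for the functional `h` with coordinates `f(e_k) g(e_k)`, and the product property
of the dual ball gives `‖h‖ ≤ ‖f‖`; hence `‖T‖ ≤ ‖f‖`. Conversely `f = (∑_{k<N} e_k^*) ∘ T` for
large `N`, so `‖f‖ ≤ ‖T‖`. Thus the partial sums of the two series have the same mutual
distances, and one sequence is Cauchy iff the other is.
-/

open Finset Filter

theorem cauchySeq_iff_of_dist_eq {ι α β : Type*} [Nonempty ι] [SemilatticeSup ι]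
    [PseudoMetricSpace α] [PseudoMetricSpace β] {u : ι → α} {v : ι → β} (h : ∀ m n, dist (u m) (u n) = dist (v m) (v n)) :
    CauchySeq u ↔ CauchySeq v := by
  simp only [Metric.cauchySeq_iff, h]

section Diagonal

variable {X : Type*} [NormedAddCommGroup X] [NormedSpace ℝ X]

def DualBallMulClosed (e : ℕ → X) : Prop :=
  ∀ f g h : X →L[ℝ] ℝ, ‖f‖ ≤ 1 → ‖g‖ ≤ 1 → (∀ k, h (e k) = f (e k) * g (e k)) → ‖h‖ ≤ 1

theorem DualBallMulClosed.norm_le {e : ℕ → X} (he : DualBallMulClosed e)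
    {f g h : X →L[ℝ] ℝ} (hg : ‖g‖ ≤ 1) (hfg : ∀ k, h (e k) = f (e k) * g (e k)) :
    ‖h‖ ≤ ‖f‖ := by
  refine le_of_forall_gt_imp_ge_of_dense fun t ht => ?_
  have ht0 : 0 < t := (norm_nonneg f).trans_lt ht
  have hscaled := he (t⁻¹ • f) g (t⁻¹ • h)
    (by rw [norm_smul, Real.norm_of_nonneg (inv_nonneg.2 ht0.le)]
        exact inv_mul_le_one_of_le₀ ht.le ht0.le)
    hg (fun k => by simp [hfg k, mul_assoc])
  rw [norm_smul, Real.norm_of_nonneg (inv_nonneg.2 ht0.le)] at hscaled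
  exact (inv_mul_le_one₀ ht0).1 hscaled

variable {e : ℕ → X} {es : ℕ → X →L[ℝ] ℝ}

theorem sum_smul_apply_of_biorthogonal (hbi : ∀ n m, es n (e m) = if n = m then 1 else 0)
    (c : ℕ → ℝ) (F : Finset ℕ) (k : ℕ) :
    (∑ i ∈ F, c i • es i) (e k) = if k ∈ F then c k else 0 := by
  simp [hbi]

theorem norm_sum_smul_smulRight_le (hbi : ∀ n m, es n (e m) = if n = m then 1 else 0)
    (hball : DualBallMulClosed e) (a : ℕ → ℝ) (F : Finset ℕ) :
    ‖∑ i ∈ F, a i • (es i).smulRight (e i)‖ ≤ ‖∑ i ∈ F, a i • es i‖ := by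
  refine ContinuousLinearMap.opNorm_le_bound _ (norm_nonneg _) fun x => ?_
  set T := ∑ i ∈ F, a i • (es i).smulRight (e i)
  obtain ⟨g, hg, hgT⟩ := exists_dual_vector'' ℝ (T x)
  set h := ∑ i ∈ F, (a i * g (e i)) • es i
  have hcoord : ∀ k, h (e k) = (∑ i ∈ F, a i • es i) (e k) * g (e k) := by
    intro k
    simp only [h, sum_smul_apply_of_biorthogonal hbi]
    split_ifs <;> simp
  have hgh : g (T x) = h x := by
    simp only [T, h, _root_.sum_apply, smul_apply, ContinuousLinearMap.smulRight_apply, map_sum,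
      map_smul, smul_eq_mul]
    exact sum_congr rfl fun i _ => by ring
  calc ‖T x‖ = g (T x) := hgT.symm
    _ = h x := hgh
    _ ≤ ‖h‖ * ‖x‖ := (le_abs_self _).trans (h.le_opNorm x)
    _ ≤ ‖∑ i ∈ F, a i • es i‖ * ‖x‖ := by gcongr; exact hball.norm_le hg hcoord

theorem sum_range_comp_sum_smul_smulRight (hbi : ∀ n m, es n (e m) = if n = m then 1 else 0)
    (a : ℕ → ℝ) {F : Finset ℕ} {N : ℕ} (hF : F ⊆ range N) :
    (∑ k ∈ range N, es k).comp (∑ i ∈ F, a i • (es i).smulRight (e i)) = ∑ i ∈ F, a i • es i := by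
  ext x
  simp only [ContinuousLinearMap.comp_apply, _root_.sum_apply, smul_apply,
    ContinuousLinearMap.smulRight_apply, map_sum, map_smul, hbi, sum_ite_eq', mem_range, smul_eq_mul,
    mul_ite, mul_one, mul_zero]
  exact sum_congr rfl fun i hi => if_pos (mem_range.1 (hF hi))

theorem norm_sum_smul_le_norm_sum_smul_smulRight
    (hbi : ∀ n m, es n (e m) = if n = m then 1 else 0)
    (hsumball : ∀ N : ℕ, ‖∑ i ∈ range N, es i‖ ≤ 1) (a : ℕ → ℝ) (F : Finset ℕ) :
    ‖∑ i ∈ F, a i • es i‖ ≤ ‖∑ i ∈ F, a i • (es i).smulRight (e i)‖ := by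
  obtain ⟨N, hN⟩ := F.exists_nat_subset_range
  rw [← sum_range_comp_sum_smul_smulRight hbi a hN]
  exact (ContinuousLinearMap.opNorm_comp_le _ _).trans
    (mul_le_of_le_one_left (norm_nonneg _) (hsumball N))

theorem norm_sum_smul_smulRight_eq (hbi : ∀ n m, es n (e m) = if n = m then 1 else 0)
    (hsumball : ∀ N : ℕ, ‖∑ i ∈ range N, es i‖ ≤ 1) (hball : DualBallMulClosed e)
    (a : ℕ → ℝ) (F : Finset ℕ) :
    ‖∑ i ∈ F, a i • (es i).smulRight (e i)‖ = ‖∑ i ∈ F, a i • es i‖ :=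
  (norm_sum_smul_smulRight_le hbi hball a F).antisymm
    (norm_sum_smul_le_norm_sum_smul_smulRight hbi hsumball a F)

end Diagonal

theorem stmt15_general {X : Type*} [NormedAddCommGroup X] [NormedSpace ℝ X]
    (e : ℕ → X) (es : ℕ → X →L[ℝ] ℝ)
    (hbi : ∀ n m, es n (e m) = if n = m then 1 else 0)
    -- the dual ball contains `± ∑_{i<N} e_i^*` (normalization `C₁ = 1`)
    (hsumball : ∀ N : ℕ, ‖∑ i ∈ range N, es i‖ ≤ 1)
    -- `B_{X^*} · B_{X^*} ⊆ B_{X^*}` for coordinatewise products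
    -- (normalization `C₂ = 1`)
    (hball : ∀ f g h : X →L[ℝ] ℝ, ‖f‖ ≤ 1 → ‖g‖ ≤ 1 →
      (∀ k, h (e k) = f (e k) * g (e k)) → ‖h‖ ≤ 1) :
    ∀ a : ℕ → ℝ,
      CauchySeq (fun N => ∑ i ∈ range N, a i • es i) ↔
      CauchySeq (fun N => ∑ i ∈ range N, a i • (es i).smulRight (e i)) := by
  intro a
  refine cauchySeq_iff_of_dist_eq fun M N => ?_
  wlog hMN : M ≤ N generalizing M N
  · rw [dist_comm, this N M (le_of_not_ge hMN), dist_comm]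
  simp only [dist_eq_norm', ← sum_Ico_eq_sub _ hMN, norm_sum_smul_smulRight_eq hbi hsumball hball]

/-- Let `X` have a normalized monotone Schauder basis `(e n)` such that the
dual unit ball is closed under coordinatewise products and contains
`±∑_{i<N} e_i^*` for all `N`.  Then a series `∑ a_i e_i^*` converges in norm
in `X^*` iff the corresponding series of rank-one diagonal operators
`∑ a_i e_i^* ⊗ e_i` converges in operator norm; i.e. compact diagonal
operators correspond exactly to the norm-closed span of the biorthogonal
functionals. -/
theorem stmt15 {X : Type*} [NormedAddCommGroup X] [NormedSpace ℝ X] [CompleteSpace X]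
    (e : ℕ → X) (es : ℕ → X →L[ℝ] ℝ)
    (hbi : ∀ n m, es n (e m) = if n = m then 1 else 0)
    (hnormal : ∀ n, ‖e n‖ = 1)
    (hmono : ∀ (x : X) (n : ℕ), ‖∑ i ∈ range n, es i x • e i‖ ≤ ‖x‖)
    (hexp : ∀ x : X,
      Tendsto (fun n => ∑ i ∈ range n, es i x • e i) atTop (nhds x))
    -- the dual ball contains `± ∑_{i<N} e_i^*` (normalization `C₁ = 1`)
    (hsumball : ∀ N : ℕ, ‖∑ i ∈ range N, es i‖ ≤ 1)
    -- `B_{X^*} · B_{X^*} ⊆ B_{X^*}` for coordinatewise products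
    -- (normalization `C₂ = 1`)
    (hball : ∀ f g h : X →L[ℝ] ℝ, ‖f‖ ≤ 1 → ‖g‖ ≤ 1 →
      (∀ k, h (e k) = f (e k) * g (e k)) → ‖h‖ ≤ 1) :
    ∀ a : ℕ → ℝ,
      CauchySeq (fun N => ∑ i ∈ range N, a i • es i) ↔
      CauchySeq (fun N => ∑ i ∈ range N, a i • (es i).smulRight (e i)) :=
  stmt15_general e es hbi hsumball hball
end
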